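/- As formal power series in q: \sum_{n≥0} (-1)^n q^{n(n+1)} / ((q^2;q^2)_n (1-q^{2n+1})) · (1-q) = (q^2;q^2)_∞ / (q^3;q^2)_∞. -/

import Mathlib

/-!
Work in `ℚ⟦q⟧ ⧸ (q^(N+1))`, where `q` is nilpotent: all the infinite sums and products become
finite, and every denominator is `1 - (nilpotent)`, a unit, so `Ring.inverse` is a true inverse.
With base `p = q²`, expand `1 / (1 - x pⁿ)` as a geometric series in `x` and swap the sums.
By Euler's identity `E_p(z) = (-z; p)_∞` the coefficient of `xᵐ` is
`(p^(m+1); p)_∞ = (p; p)_∞ / (p; p)_m`, and by Euler's other identity `e_p(x) = 1 / (x; p)_∞`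
what remains is `(p; p)_∞ / (x; p)_∞`, whose first factor `1 - x` cancels.
Both Euler identities follow by iterating their functional equations in `z` until `z pʳ` vanishes.
-/

open Finset PowerSeries
open scoped Ring

theorem Nat.two_mul_choose_two_succ (n : ℕ) : 2 * (n + 1).choose 2 = n * (n + 1) := by
  induction n with
  | zero => rfl
  | succ n ih => rw [Nat.choose_succ_succ', Nat.choose_one_right, mul_add, ih]; ring

theorem Ring.inverse_eq_of_mul_eq_one {M₀ : Type*} [CommMonoidWithZero M₀] {a b : M₀}
    (h : a * b = 1) : a⁻¹ʳ = b := by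
  rw [← Ring.inverse_mul_cancel_left a b (IsUnit.of_mul_eq_one b h), h, mul_one]

section QPochhammer

variable {R : Type*} [CommRing R]

def qPochhammer (a q : R) (n : ℕ) : R := ∏ k ∈ range n, (1 - a * q ^ k)

theorem qPochhammer_succ (a q : R) (n : ℕ) :
    qPochhammer a q (n + 1) = qPochhammer a q n * (1 - a * q ^ n) :=
  prod_range_succ _ _

theorem qPochhammer_succ' (a q : R) (n : ℕ) :
    qPochhammer a q (n + 1) = (1 - a) * qPochhammer (a * q) q n := by
  simp only [qPochhammer, prod_range_succ', pow_zero, mul_one, pow_succ, mul_assoc, mul_comm q]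
  ring

theorem qPochhammer_add (a q : R) (m n : ℕ) :
    qPochhammer a q (m + n) = qPochhammer a q m * qPochhammer (a * q ^ m) q n := by
  simp only [qPochhammer, prod_range_add, pow_add, mul_assoc]

theorem qPochhammer_zero_left (q : R) (n : ℕ) : qPochhammer 0 q n = 1 := by
  simp [qPochhammer]

theorem qPochhammer_pow_pow (y : R) (a b n : ℕ) :
    qPochhammer (y ^ a) (y ^ b) n = ∏ k ∈ range n, (1 - y ^ (b * k + a)) := by
  simp only [qPochhammer, ← pow_mul, ← pow_add, add_comm a]

variable {q : R} {M : ℕ}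

theorem qPochhammer_of_pow_eq_zero (hq : q ^ M = 0) (a : R) {n : ℕ} (hn : M ≤ n) :
    qPochhammer a q n = qPochhammer a q M := by
  obtain ⟨k, rfl⟩ := Nat.exists_eq_add_of_le hn
  rw [qPochhammer_add, hq, mul_zero, qPochhammer_zero_left, mul_one]

theorem isUnit_qPochhammer {a : R} (ha : IsNilpotent a) (q : R) (n : ℕ) :
    IsUnit (qPochhammer a q n) :=
  IsUnit.prod_iff.mpr fun _ _ => ((Commute.all _ _).isNilpotent_mul_right ha).isUnit_one_sub

theorem one_sub_pow_mul_inverse_qPochhammer_succ (hq : IsNilpotent q) (n : ℕ) :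
    (1 - q ^ (n + 1)) * (qPochhammer q q (n + 1))⁻¹ʳ = (qPochhammer q q n)⁻¹ʳ := by
  rw [qPochhammer_succ, Ring.mul_inverse_rev, ← pow_succ',
    Ring.mul_inverse_cancel_left _ _ (hq.pow_succ n).isUnit_one_sub]

-- Euler's q-exponentials `e_q(z)` and `E_q(z)`, truncated after `M` terms.
variable (q) in
noncomputable def smallQExp (z : R) (M : ℕ) : R := ∑ n ∈ range M, z ^ n * (qPochhammer q q n)⁻¹ʳ

variable (q) in
noncomputable def bigQExp (z : R) (M : ℕ) : R :=
  ∑ n ∈ range M, q ^ n.choose 2 * z ^ n * (qPochhammer q q n)⁻¹ʳ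

theorem smallQExp_zero (hq : q ^ M = 0) : smallQExp q 0 M = 1 := by
  cases M with
  | zero => simpa [smallQExp] using hq.symm
  | succ M => simp [smallQExp, sum_range_succ', qPochhammer]

theorem bigQExp_zero (hq : q ^ M = 0) : bigQExp q 0 M = 1 := by
  cases M with
  | zero => simpa [bigQExp] using hq.symm
  | succ M => simp [bigQExp, sum_range_succ', qPochhammer]

theorem one_sub_mul_smallQExp (hq : IsNilpotent q) {z : R} (hz : z ^ M = 0) :
    (1 - z) * smallQExp q z M = smallQExp q (z * q) M := by
  suffices smallQExp q z M - smallQExp q (z * q) M = z * smallQExp q z M by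
    linear_combination this
  have extend (w : R) (hw : w ^ M = 0) :
      smallQExp q w M = ∑ n ∈ range (M + 1), w ^ n * (qPochhammer q q n)⁻¹ʳ := by
    rw [sum_range_succ, hw, zero_mul, add_zero, smallQExp]
  conv_lhs => rw [extend z hz, extend _ (by rw [mul_pow, hz, zero_mul]), ← sum_sub_distrib]
  rw [sum_range_succ', smallQExp, mul_sum]
  simp only [pow_zero, sub_self, add_zero]
  refine sum_congr rfl fun k _ => ?_
  rw [← one_sub_pow_mul_inverse_qPochhammer_succ hq k]
  ring

theorem bigQExp_eq_one_add_mul (hq : IsNilpotent q) {z : R} (hz : z ^ M = 0) :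
    bigQExp q z M = (1 + z) * bigQExp q (z * q) M := by
  suffices bigQExp q z M - bigQExp q (z * q) M = z * bigQExp q (z * q) M by
    linear_combination this
  have extend (w : R) (hw : w ^ M = 0) :
      bigQExp q w M = ∑ n ∈ range (M + 1), q ^ n.choose 2 * w ^ n * (qPochhammer q q n)⁻¹ʳ := by
    rw [sum_range_succ, hw, mul_zero, zero_mul, add_zero, bigQExp]
  conv_lhs => rw [extend z hz, extend _ (by rw [mul_pow, hz, zero_mul]), ← sum_sub_distrib]
  rw [sum_range_succ', bigQExp, mul_sum]
  simp only [pow_zero, sub_self, add_zero]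
  refine sum_congr rfl fun k _ => ?_
  rw [← one_sub_pow_mul_inverse_qPochhammer_succ hq k, Nat.choose_succ_succ', Nat.choose_one_right]
  ring

theorem qPochhammer_mul_smallQExp (hq : IsNilpotent q) {z : R} (hz : z ^ M = 0) (r : ℕ) :
    qPochhammer z q r * smallQExp q z M = smallQExp q (z * q ^ r) M := by
  induction r with
  | zero => simp [qPochhammer]
  | succ r ih =>
    rw [qPochhammer_succ, mul_right_comm, ih, mul_comm,
      one_sub_mul_smallQExp hq (by rw [mul_pow, hz, zero_mul]), mul_assoc, ← pow_succ]

theorem bigQExp_eq_qPochhammer_mul (hq : IsNilpotent q) {z : R} (hz : z ^ M = 0) (r : ℕ) :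
    bigQExp q z M = qPochhammer (-z) q r * bigQExp q (z * q ^ r) M := by
  induction r with
  | zero => simp [qPochhammer]
  | succ r ih =>
    rw [ih, bigQExp_eq_one_add_mul hq (by rw [mul_pow, hz, zero_mul]), qPochhammer_succ, mul_assoc,
      ← pow_succ, neg_mul, sub_neg_eq_add, mul_assoc]

theorem smallQExp_eq_inverse_qPochhammer (hq : q ^ M = 0) {z : R} (hz : z ^ M = 0) :
    smallQExp q z M = (qPochhammer z q M)⁻¹ʳ := by
  have h := qPochhammer_mul_smallQExp ⟨M, hq⟩ hz M
  rw [hq, mul_zero, smallQExp_zero hq] at h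
  exact (Ring.inverse_eq_of_mul_eq_one h).symm

theorem bigQExp_eq_qPochhammer (hq : q ^ M = 0) {z : R} (hz : z ^ M = 0) :
    bigQExp q z M = qPochhammer (-z) q M := by
  rw [bigQExp_eq_qPochhammer_mul ⟨M, hq⟩ hz M, hq, mul_zero, bigQExp_zero hq, mul_one]

theorem inverse_one_sub_eq_geom_sum {z : R} (hz : z ^ M = 0) :
    (1 - z)⁻¹ʳ = ∑ m ∈ range M, z ^ m :=
  Ring.inverse_eq_of_mul_eq_one (by rw [mul_neg_geom_sum, hz, sub_zero])

theorem qPochhammer_pow_succ (hq : q ^ M = 0) (m : ℕ) :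
    qPochhammer (q ^ (m + 1)) q M = qPochhammer q q M * (qPochhammer q q m)⁻¹ʳ := by
  have h := qPochhammer_add q q m M
  rw [qPochhammer_of_pow_eq_zero hq q (Nat.le_add_left M m), ← pow_succ'] at h
  rw [h, mul_comm (qPochhammer q q m),
    Ring.mul_inverse_cancel_right _ _ (isUnit_qPochhammer ⟨M, hq⟩ q m)]

theorem inverse_qPochhammer_mul_one_sub (hq : q ^ M = 0) {x : R} (hx : IsNilpotent x) :
    (qPochhammer x q M)⁻¹ʳ * (1 - x) = (qPochhammer (x * q) q M)⁻¹ʳ := by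
  rw [← qPochhammer_of_pow_eq_zero hq x M.le_succ, qPochhammer_succ', Ring.mul_inverse_rev,
    mul_assoc, Ring.inverse_mul_cancel _ hx.isUnit_one_sub, mul_one]

theorem sum_mul_one_sub_eq_qPochhammer_mul_inverse (hq : q ^ M = 0) {x : R} (hx : x ^ M = 0) :
    (∑ n ∈ range M, (-1) ^ n * q ^ (n + 1).choose 2 * (qPochhammer q q n * (1 - x * q ^ n))⁻¹ʳ) *
        (1 - x) =
      qPochhammer q q M * (qPochhammer (x * q) q M)⁻¹ʳ := by
  have expand : ∑ n ∈ range M, (-1) ^ n * q ^ (n + 1).choose 2 *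
        (qPochhammer q q n * (1 - x * q ^ n))⁻¹ʳ =
      ∑ m ∈ range M, x ^ m * bigQExp q (-q ^ (m + 1)) M := by
    have hxq (n : ℕ) : (x * q ^ n) ^ M = 0 := by rw [mul_pow, hx, zero_mul]
    simp only [Ring.mul_inverse_rev, inverse_one_sub_eq_geom_sum (hxq _), bigQExp, mul_sum, sum_mul]
    rw [sum_comm]
    refine sum_congr rfl fun m _ => sum_congr rfl fun n _ => ?_
    rw [Nat.choose_succ_succ', Nat.choose_one_right, neg_pow]
    ring
  have hqm (m : ℕ) : (-q ^ (m + 1)) ^ M = 0 := by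
    rw [neg_pow, ← pow_mul, mul_comm (m + 1), pow_mul, hq, zero_pow m.succ_ne_zero, mul_zero]
  calc _ = qPochhammer q q M * (smallQExp q x M * (1 - x)) := by
        simp only [expand, smallQExp, mul_sum, sum_mul]
        refine sum_congr rfl fun m _ => ?_
        rw [bigQExp_eq_qPochhammer hq (hqm m), neg_neg, qPochhammer_pow_succ hq]
        ring
    _ = _ := by
        rw [smallQExp_eq_inverse_qPochhammer hq hx, inverse_qPochhammer_mul_one_sub hq ⟨M, hx⟩]

end QPochhammer

namespace PowerSeries

theorem map_inv_eq_inverse {k S : Type*} [Field k] [CommRing S] (φ : k⟦X⟧ →+* S) {f : k⟦X⟧}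
    (hf : constantCoeff f ≠ 0) : φ f⁻¹ = (φ f)⁻¹ʳ :=
  (Ring.inverse_eq_of_mul_eq_one (by rw [← map_mul, PowerSeries.mul_inv_cancel f hf, map_one])).symm

theorem coeff_eq_of_mk_eq {R : Type*} [CommRing R] {f g : R⟦X⟧} {N : ℕ}
    (h : Ideal.Quotient.mk (Ideal.span {X ^ (N + 1)}) f = Ideal.Quotient.mk _ g) :
    coeff N f = coeff N g := by
  rw [Ideal.Quotient.eq, Ideal.mem_span_singleton, X_pow_dvd_iff] at h
  simpa [sub_eq_zero] using h N N.lt_succ_self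

end PowerSeries

/-- The truncations are harmless: the omitted terms, and the omitted factors minus `1`,
have order `> N`. -/
theorem eq_3_11_x_eq_q (N : ℕ) :
    PowerSeries.coeff N
        ((∑ n ∈ range (N + 1),
            (-1 : PowerSeries ℚ) ^ n * X ^ (n * (n + 1)) *
              ((∏ k ∈ range n, (1 - X ^ (2 * k + 2))) * (1 - X ^ (2 * n + 1)))⁻¹) *
          (1 - X))
      = PowerSeries.coeff N
          ((∏ k ∈ range (N + 1), (1 - (X : PowerSeries ℚ) ^ (2 * k + 2))) *
            (∏ k ∈ range (N + 1), (1 - (X : PowerSeries ℚ) ^ (2 * k + 3)))⁻¹) := by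
  apply coeff_eq_of_mk_eq
  set y := Ideal.Quotient.mk (Ideal.span {(X : PowerSeries ℚ) ^ (N + 1)}) X
  have hy : y ^ (N + 1) = 0 := by
    rw [← map_pow, Ideal.Quotient.eq_zero_iff_mem]; exact Ideal.mem_span_singleton_self _
  have key := sum_mul_one_sub_eq_qPochhammer_mul_inverse (q := y ^ 2)
    (by rw [← pow_mul]; exact pow_eq_zero_of_le (by omega) hy) hy
  simp only [← pow_succ', ← pow_mul, Nat.two_mul_choose_two_succ, qPochhammer_pow_pow] at key
  simp (disch := simp) only [map_mul, map_sum, map_prod, map_sub, map_one, map_pow, map_neg,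
    map_inv_eq_inverse]
  exact key
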